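/- The function J satisfies J′(1/2) = 0, J″(1/2) = 0, J‴(1/2) = 0, J^{(5)}(1/2) = 0, J^{(7)}(1/2) = 0, and J″(t) < 0 for every t ∈ (0, 1) with t ≠ 1/2. -/

import Mathlib

/-- The entropy-like function `I(t) = (t-1) log(1-t) - t log t`. -/
noncomputable def Ifun (t : ℝ) : ℝ := (t - 1) * Real.log (1 - t) - t * Real.log t

/-- `J(t) = I(t) + (2t-1)²/2`. -/
noncomputable def Jfun (t : ℝ) : ℝ := Ifun t + (2 * t - 1) ^ 2 / 2

/-!
`I` is the binary entropy function, so `J` is symmetric under `t ↦ 1 - t`; reflecting about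
`1/2` flips the sign of every odd derivative there, which therefore vanishes. The second
derivative is `J''(t) = 4 - 1/(t(1-t))`, negative away from `t = 1/2` because `t(1-t) < 1/4`.
-/

open Real Set

theorem iteratedDeriv_eq_zero_of_odd_of_symm {𝕜 F : Type*} [NontriviallyNormedField 𝕜]
    [CharZero 𝕜] [NormedAddCommGroup F] [NormedSpace 𝕜 F] {f : 𝕜 → F} {s : 𝕜}
    (hf : ∀ x, f (s - x) = f x) {n : ℕ} (hn : Odd n) : iteratedDeriv n f (s / 2) = 0 := by
  have h := congrFun (iteratedDeriv_comp_const_sub n f s) (s / 2)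
  simp only [hf, sub_half, hn.neg_one_pow, neg_one_smul] at h
  have h2 : (2 : 𝕜) • iteratedDeriv n f (s / 2) = 0 := by
    rw [two_smul]
    nth_rewrite 1 [h]
    exact neg_add_cancel _
  exact (smul_eq_zero.mp h2).resolve_left two_ne_zero

theorem contDiffAt_binEntropy {n : WithTop ℕ∞} {p : ℝ} (hp₀ : p ≠ 0) (hp₁ : p ≠ 1) :
    ContDiffAt ℝ n binEntropy p := by
  have : 1 - p ≠ 0 := sub_ne_zero.mpr hp₁.symm
  unfold binEntropy
  fun_prop (disch := simp [*])

theorem iteratedDeriv_two_sq_two_mul_sub_one_div_two :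
    iteratedDeriv 2 (fun x : ℝ ↦ (2 * x - 1) ^ 2 / 2) = fun _ ↦ 4 := by
  have h₁ : deriv (fun x : ℝ ↦ (2 * x - 1) ^ 2 / 2) = fun x ↦ 4 * x - 2 := by
    ext x
    have h : HasDerivAt (fun x : ℝ ↦ (2 * x - 1) ^ 2 / 2) (4 * x - 2) x :=
      ((((hasDerivAt_id' x).const_mul 2).sub_const 1).pow 2 |>.div_const 2).congr_deriv (by ring)
    exact h.deriv
  rw [iteratedDeriv_succ, iteratedDeriv_one, h₁]
  ext x
  exact ((((hasDerivAt_id' x).const_mul 4).sub_const 2).congr_deriv (mul_one 4)).deriv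

theorem four_sub_one_div_mul_one_sub_neg {t : ℝ} (ht : t ∈ Ioo 0 1) (ht' : t ≠ 1 / 2) :
    4 - 1 / (t * (1 - t)) < 0 := by
  obtain ⟨ht₀, ht₁⟩ := ht
  have hpos : 0 < t * (1 - t) := mul_pos ht₀ (sub_pos.mpr ht₁)
  have hsq : 0 < (2 * t - 1) ^ 2 := sq_pos_of_ne_zero (fun h ↦ ht' (by linarith))
  rw [sub_neg, lt_one_div (by norm_num) hpos]
  nlinarith

theorem Ifun_eq_binEntropy : Ifun = binEntropy := by
  ext t
  simp only [Ifun, binEntropy, log_inv]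
  ring

theorem Jfun_eq_binEntropy_add : Jfun = binEntropy + fun x ↦ (2 * x - 1) ^ 2 / 2 := by
  ext x
  simp [Jfun, Ifun_eq_binEntropy]

theorem Jfun_one_sub (t : ℝ) : Jfun (1 - t) = Jfun t := by
  simp only [Jfun, Ifun_eq_binEntropy, binEntropy_one_sub]
  ring

theorem iteratedDeriv_Jfun_odd_at_half {n : ℕ} (hn : Odd n) : iteratedDeriv n Jfun (1 / 2) = 0 :=
  iteratedDeriv_eq_zero_of_odd_of_symm Jfun_one_sub hn

theorem iteratedDeriv_two_Jfun {t : ℝ} (ht₀ : t ≠ 0) (ht₁ : t ≠ 1) :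
    iteratedDeriv 2 Jfun t = 4 - 1 / (t * (1 - t)) := by
  rw [Jfun_eq_binEntropy_add, iteratedDeriv_add (contDiffAt_binEntropy ht₀ ht₁) (by fun_prop),
    iteratedDeriv_eq_iterate, deriv2_binEntropy, iteratedDeriv_two_sq_two_mul_sub_one_div_two]
  ring

theorem Jfun_derivatives_at_half :
    deriv Jfun (1 / 2) = 0 ∧
    iteratedDeriv 2 Jfun (1 / 2) = 0 ∧
    iteratedDeriv 3 Jfun (1 / 2) = 0 ∧
    iteratedDeriv 5 Jfun (1 / 2) = 0 ∧
    iteratedDeriv 7 Jfun (1 / 2) = 0 ∧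
    ∀ t ∈ Set.Ioo (0 : ℝ) 1, t ≠ 1 / 2 → iteratedDeriv 2 Jfun t < 0 := by
  refine ⟨?_, ?_, iteratedDeriv_Jfun_odd_at_half (by decide),
    iteratedDeriv_Jfun_odd_at_half (by decide), iteratedDeriv_Jfun_odd_at_half (by decide), ?_⟩
  · rw [← iteratedDeriv_one]
    exact iteratedDeriv_Jfun_odd_at_half odd_one
  · rw [iteratedDeriv_two_Jfun (by norm_num) (by norm_num)]
    norm_num
  · intro t ht ht'
    rw [iteratedDeriv_two_Jfun ht.1.ne' ht.2.ne]
    exact four_sub_one_div_mul_one_sub_neg ht ht'
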